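/- Let T: V → V be a linear endomorphism of a vector space V with basis indexed by the vertices of a ray v₀, v₁, v₂, …, such that T(δ_{v_{t+1}}) = p·δ_{v_t} + q·δ_{v_{t+2}} for all t ≥ 0, with p, q ≠ 0. If F: V → V is linear, commutes with T, and satisfies F(δ_{v_s}) = 0 for all s ≥ t+1 for some t ≥ 0, then also F(δ_{v_t}) = 0. -/
import Mathlib

open Finsupp

/-- If `T δ_{t+1} = p δ_t + q δ_{t+2}` for all `t` with `p, q ≠ 0`, and `F`
commutes with `T` and kills `δ_s` for every `s ≥ t+1`, then `F δ_t = 0`. -/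
theorem stmt15 (p q : ℝ) (hp : p ≠ 0) (hq : q ≠ 0)
    (T F : (ℕ →₀ ℝ) →ₗ[ℝ] (ℕ →₀ ℝ))
    (hT : ∀ t : ℕ, T (Finsupp.single (t + 1) 1) =
      p • Finsupp.single t 1 + q • Finsupp.single (t + 2) 1)
    (hcomm : F ∘ₗ T = T ∘ₗ F)
    (t : ℕ) (hF : ∀ s, t + 1 ≤ s → F (Finsupp.single s 1) = 0) :
    F (Finsupp.single t 1) = 0 := by
  have h := congrArg (fun L : (ℕ →₀ ℝ) →ₗ[ℝ] (ℕ →₀ ℝ) => L (Finsupp.single (t + 1) 1)) hcomm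
  simp only [LinearMap.comp_apply, hT t, hF (t + 1) le_rfl, map_zero, map_add, map_smul,
    hF (t + 2) (by omega)] at h
  simpa [smul_eq_zero, hp] using h
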